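/- For the generalized grey Brownian motion kernel k(t,s)=(α/(βΓ(β))) s^{α/β−1}(t^{α/β}−s^{α/β})^{β−1}, where β∈(0,1] and α∈(0,2): k is homogeneous of degree α−1, the coefficients ĉ_n defined by ĉ_0=1 and ĉ_n=ĉ_{n−1}∫_0^1 k(1,s)s^{α(n−1)}ds satisfy ĉ_n=1/Γ(nβ+1) for all n≥0, and consequently Φ(t,λ)=E_β(t^α λ) for all t≥0 and λ∈ℂ. -/
import Mathlib


open MeasureTheory Filter

noncomputable section

noncomputable def coeff (k : ℝ → ℝ → ℝ) : ℕ → ℝ → ℝ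
  | 0, _ => 1
  | n + 1, t => if 0 < t then ∫ s in Set.Ioc (0:ℝ) t, k t s * coeff k n s else 0

noncomputable def Phi (k : ℝ → ℝ → ℝ) (t : ℝ) (l : ℂ) : ℂ :=
  ∑' n : ℕ, (coeff k n t : ℂ) * l ^ n

noncomputable def PhiR (k : ℝ → ℝ → ℝ) (t : ℝ) (x : ℝ) : ℝ :=
  ∑' n : ℕ, coeff k n t * x ^ n

noncomputable def chat (k : ℝ → ℝ → ℝ) (β : ℝ) : ℕ → ℝ
  | 0 => 1
  | n + 1 => chat k β n * ∫ s in Set.Ioc (0:ℝ) 1, k 1 s * s ^ (β * (n : ℝ))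

noncomputable def PhiHatC (k : ℝ → ℝ → ℝ) (β : ℝ) (z : ℂ) : ℂ :=
  ∑' n : ℕ, (chat k β n : ℂ) * z ^ n

noncomputable def PhiHatR (k : ℝ → ℝ → ℝ) (β : ℝ) (x : ℝ) : ℝ :=
  ∑' n : ℕ, chat k β n * x ^ n

noncomputable def mlC (ρ σ : ℝ) (z : ℂ) : ℂ :=
  ∑' n : ℕ, z ^ n / Complex.Gamma (((ρ * (n : ℝ) + σ : ℝ) : ℂ))

lemma realBeta {a b : ℝ} (ha : 0 < a) (hb : 0 < b) :
    ∫ s in Set.Ioc (0:ℝ) 1, s ^ (a-1) * (1-s) ^ (b-1) =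
      Real.Gamma a * Real.Gamma b / Real.Gamma (a+b) := by
  have hG : Real.Gamma (a+b) ≠ 0 := (Real.Gamma_pos_of_pos (by linarith)).ne'
  have key : Complex.betaIntegral a b =
      ((∫ s in (0:ℝ)..1, s ^ (a-1) * (1-s) ^ (b-1) : ℝ) : ℂ) := by
    rw [Complex.betaIntegral, ← intervalIntegral.integral_ofReal]
    apply intervalIntegral.integral_congr
    intro x hx
    rw [Set.uIcc_of_le zero_le_one] at hx
    push_cast
    rw [Complex.ofReal_cpow hx.1 (a-1), Complex.ofReal_cpow (by linarith [hx.2]) (b-1)]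
    push_cast
    ring
  have h2 := Complex.Gamma_mul_Gamma_eq_betaIntegral (s := (a:ℂ)) (t := (b:ℂ))
    (by simpa using ha) (by simpa using hb)
  rw [key, ← Complex.ofReal_add, Complex.Gamma_ofReal, Complex.Gamma_ofReal, Complex.Gamma_ofReal,
    ← Complex.ofReal_mul, ← Complex.ofReal_mul] at h2
  have h3 := Complex.ofReal_injective h2
  rw [intervalIntegral.integral_of_le zero_le_one] at h3
  rw [h3]
  field_simp

lemma subst_rpow {p m c : ℝ} (hp : 0 < p) :
    (∫ x in Set.Ioc (0:ℝ) 1, p * x ^ (p-1) * ((x ^ p) ^ m * (1 - x ^ p) ^ c)) =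
      ∫ u in Set.Ioc (0:ℝ) 1, u ^ m * (1 - u) ^ c := by
  set f : ℝ → ℝ := fun u => u ^ m * (1 - u) ^ c with hf
  have hinter : Set.Ioi (0:ℝ) ∩ Set.Ioc (0:ℝ) 1 = Set.Ioc (0:ℝ) 1 := by
    rw [Set.inter_eq_right]; exact Set.Ioc_subset_Ioi_self
  have h := integral_comp_rpow_Ioi_of_pos (g := Set.indicator (Set.Ioc (0:ℝ) 1) f) hp
  have hmem : ∀ x : ℝ, 0 < x → (x ^ p ∈ Set.Ioc (0:ℝ) 1 ↔ x ∈ Set.Ioc (0:ℝ) 1) := by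
    intro x hx
    simp only [Set.mem_Ioc, Real.rpow_pos_of_pos hx, hx, true_and]
    rw [Real.rpow_le_one_iff_of_pos hx]
    constructor
    · rintro (⟨h1, h2⟩ | ⟨h1, h2⟩) <;> linarith
    · intro h1; right; exact ⟨h1, hp.le⟩
  have hL : (∫ x in Set.Ioi (0:ℝ), (p * x ^ (p-1)) • Set.indicator (Set.Ioc (0:ℝ) 1) f (x ^ p))
      = ∫ x in Set.Ioc (0:ℝ) 1, p * x ^ (p-1) * ((x ^ p) ^ m * (1 - x ^ p) ^ c) := by
    rw [setIntegral_congr_fun measurableSet_Ioi (g := Set.indicator (Set.Ioc (0:ℝ) 1)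
        (fun x => p * x ^ (p-1) * ((x ^ p) ^ m * (1 - x ^ p) ^ c)))]
    · rw [setIntegral_indicator measurableSet_Ioc, hinter]
    · intro x hx
      simp only [smul_eq_mul]
      by_cases hx1 : x ∈ Set.Ioc (0:ℝ) 1
      · rw [Set.indicator_of_mem ((hmem x hx).mpr hx1), Set.indicator_of_mem hx1, hf]
      · rw [Set.indicator_of_notMem (fun hc => hx1 ((hmem x hx).mp hc)),
          Set.indicator_of_notMem hx1, mul_zero]
  have hR : (∫ y in Set.Ioi (0:ℝ), Set.indicator (Set.Ioc (0:ℝ) 1) f y)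
      = ∫ u in Set.Ioc (0:ℝ) 1, f u := by
    rw [setIntegral_indicator measurableSet_Ioc, hinter]
  rw [hL, hR] at h
  exact h

lemma chat_int (α β : ℝ) (hβ0 : 0 < β) (hα0 : 0 < α)
    (k : ℝ → ℝ → ℝ)
    (hk : ∀ t s : ℝ, k t s =
      (α / (β * Real.Gamma β)) * s ^ (α / β - 1) * (t ^ (α / β) - s ^ (α / β)) ^ (β - 1))
    (m : ℝ) (hm : 0 ≤ m) :
    ∫ s in Set.Ioc (0:ℝ) 1, k 1 s * s ^ (α * m) =
      Real.Gamma (β * m + 1) / Real.Gamma (β * m + β + 1) := by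
  have hGβ : (0:ℝ) < Real.Gamma β := Real.Gamma_pos_of_pos hβ0
  set p := α / β with hpdef
  have hp : 0 < p := div_pos hα0 hβ0
  have step1 : ∀ s ∈ Set.Ioc (0:ℝ) 1, k 1 s * s ^ (α * m) =
      (1 / Real.Gamma β) * (p * s ^ (p-1) * ((s ^ p) ^ (β * m) * (1 - s ^ p) ^ (β - 1))) := by
    intro s hs
    rw [hk, Real.one_rpow]
    have h1 : s ^ (α * m) = (s ^ p) ^ (β * m) := by
      rw [← Real.rpow_mul hs.1.le]
      congr 1
      rw [hpdef]
      field_simp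
    rw [h1]
    have hC : α / (β * Real.Gamma β) = (1 / Real.Gamma β) * p := by
      rw [hpdef]; field_simp
    rw [hC]; ring
  rw [setIntegral_congr_fun measurableSet_Ioc step1, MeasureTheory.integral_const_mul,
    subst_rpow hp (m := β * m) (c := β - 1)]
  have h2 : (∫ u in Set.Ioc (0:ℝ) 1, u ^ (β * m) * (1 - u) ^ (β - 1)) =
      Real.Gamma (β * m + 1) * Real.Gamma β / Real.Gamma (β * m + 1 + β) := by
    have := realBeta (a := β * m + 1) (b := β) (by positivity) hβ0
    simpa using this
  rw [h2]
  rw [show β * m + 1 + β = β * m + β + 1 by ring]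
  field_simp

theorem stmt11 (α β : ℝ) (hβ0 : 0 < β) (hβ1 : β ≤ 1) (hα0 : 0 < α) (hα2 : α < 2)
    (k : ℝ → ℝ → ℝ)
    (hk : ∀ t s : ℝ, k t s =
      (α / (β * Real.Gamma β)) * s ^ (α / β - 1) * (t ^ (α / β) - s ^ (α / β)) ^ (β - 1)) :
    (∀ t : ℝ, 0 < t → ∀ s ∈ Set.Ioo (0:ℝ) 1, k t (t * s) = t ^ (α - 1) * k 1 s) ∧
    (∀ n : ℕ, chat k α n = 1 / Real.Gamma ((n : ℝ) * β + 1)) ∧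
    (∀ t : ℝ, 0 ≤ t → ∀ l : ℂ, Phi k t l = mlC β 1 (((t ^ α : ℝ) : ℂ) * l)) := by
  set p := α / β with hpdef
  have hp : 0 < p := div_pos hα0 hβ0
  have hpβ : p * β = α := div_mul_cancel₀ α hβ0.ne'
  -- Part 1: homogeneity
  have part1 : ∀ t : ℝ, 0 < t → ∀ s ∈ Set.Ioo (0:ℝ) 1, k t (t * s) = t ^ (α - 1) * k 1 s := by
    intro t ht s hs
    obtain ⟨hs0, hs1⟩ := hs
    rw [hk, hk, Real.one_rpow]
    have e1 : (t*s) ^ (p-1) = t ^ (p-1) * s ^ (p-1) := Real.mul_rpow ht.le hs0.le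
    have hsp1 : (0:ℝ) ≤ 1 - s ^ p := by
      have := Real.rpow_le_one hs0.le hs1.le hp.le
      linarith
    have e2 : t ^ p - (t*s) ^ p = t ^ p * (1 - s ^ p) := by
      rw [Real.mul_rpow ht.le hs0.le]; ring
    have e3 : (t ^ p * (1 - s ^ p)) ^ (β-1) = t ^ (p*(β-1)) * (1 - s ^ p) ^ (β-1) := by
      rw [Real.mul_rpow (Real.rpow_pos_of_pos ht p).le hsp1, ← Real.rpow_mul ht.le]
    rw [e1, e2, e3]
    have e4 : t ^ (p-1) * t ^ (p*(β-1)) = t ^ (α-1) := by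
      rw [← Real.rpow_add ht]
      congr 1
      rw [← hpβ]; ring
    rw [← e4]; ring
  -- Part 2: explicit chat
  have hGne : ∀ x : ℝ, 0 < x → Real.Gamma x ≠ 0 := fun x hx => (Real.Gamma_pos_of_pos hx).ne'
  have part2 : ∀ n : ℕ, chat k α n = 1 / Real.Gamma ((n : ℝ) * β + 1) := by
    intro n
    induction n with
    | zero => simp [chat, Real.Gamma_one]
    | succ n ih =>
      rw [chat, ih, chat_int α β hβ0 hα0 k hk n (Nat.cast_nonneg n)]
      have h1 : β * (n:ℝ) + β + 1 = ((n:ℝ)+1) * β + 1 := by ring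
      have h2 : β * (n:ℝ) + 1 = (n:ℝ) * β + 1 := by ring
      rw [h1, h2]
      push_cast
      rw [div_mul_div_comm, one_mul]
      rw [mul_comm (Real.Gamma ((n:ℝ) * β + 1)), ← div_div, div_right_comm,
        div_self (hGne _ (by positivity))]
  -- coefficient formula
  have coeff_eq : ∀ n : ℕ, ∀ t : ℝ, 0 < t → coeff k n t = t ^ (α * (n:ℝ)) * chat k α n := by
    intro n
    induction n with
    | zero => intro t ht; simp [coeff, chat]
    | succ n ih =>
      intro t ht
      rw [coeff, if_pos ht]
      have step1 : ∀ s ∈ Set.Ioc (0:ℝ) t, k t s * coeff k n s =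
          k t s * (s ^ (α * (n:ℝ)) * chat k α n) := by
        intro s hs; rw [ih s hs.1]
      rw [setIntegral_congr_fun measurableSet_Ioc step1,
        ← intervalIntegral.integral_of_le ht.le]
      have hsub := intervalIntegral.smul_integral_comp_mul_left
        (f := fun s => k t s * (s ^ (α * (n:ℝ)) * chat k α n)) (a := 0) (b := 1) t
      simp only [mul_zero, mul_one] at hsub
      rw [← hsub, intervalIntegral.integral_of_le zero_le_one,
        MeasureTheory.integral_Ioc_eq_integral_Ioo]
      have step2 : ∀ x ∈ Set.Ioo (0:ℝ) 1, k t (t * x) * ((t * x) ^ (α * (n:ℝ)) * chat k α n)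
          = (t ^ (α - 1) * t ^ (α * (n:ℝ)) * chat k α n) * (k 1 x * x ^ (α * (n:ℝ))) := by
        intro x hx
        rw [part1 t ht x hx, Real.mul_rpow ht.le hx.1.le]
        ring
      rw [setIntegral_congr_fun measurableSet_Ioo step2, MeasureTheory.integral_const_mul,
        ← MeasureTheory.integral_Ioc_eq_integral_Ioo]
      rw [chat]
      rw [smul_eq_mul]
      have e5 : t * (t ^ (α - 1) * t ^ (α * (n:ℝ))) = t ^ (α * ((n:ℕ)+1:ℝ)) := by
        nth_rewrite 1 [← Real.rpow_one t]
        rw [← Real.rpow_add ht, ← Real.rpow_add ht]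
        congr 1; ring
      push_cast
      rw [← e5]; ring
  -- Part 3
  have part3 : ∀ t : ℝ, 0 ≤ t → ∀ l : ℂ, Phi k t l = mlC β 1 (((t ^ α : ℝ) : ℂ) * l) := by
    intro t ht l
    rcases ht.lt_or_eq with ht | ht
    · rw [Phi, mlC]
      apply tsum_congr
      intro n
      rw [coeff_eq n t ht, part2 n]
      have e6 : ((t ^ α : ℝ) : ℂ) * l = ((t ^ α : ℝ) : ℂ) * l := rfl
      have e7 : (((t ^ α : ℝ) : ℂ) * l) ^ n = ((t ^ (α * (n:ℝ)) : ℝ) : ℂ) * l ^ n := by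
        rw [mul_pow, ← Complex.ofReal_pow, ← Real.rpow_natCast (t ^ α) n,
          ← Real.rpow_mul ht.le]
      rw [e7]
      have e8 : Complex.Gamma (((β * (n:ℝ) + 1 : ℝ) : ℂ)) = ((Real.Gamma ((n:ℝ) * β + 1) : ℝ) : ℂ) := by
        rw [Complex.Gamma_ofReal, mul_comm β]
      rw [e8]
      push_cast
      ring
    · subst ht
      have hc : ∀ n : ℕ, n ≠ 0 → (coeff k n (0:ℝ) : ℂ) * l ^ n = 0 := by
        intro n hn
        match n, hn with
        | (m+1), _ => simp [coeff]
      rw [Phi, mlC]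
      rw [tsum_eq_single 0 hc]
      have hz : ((((0:ℝ) ^ α : ℝ)) : ℂ) * l = 0 := by
        rw [Real.zero_rpow hα0.ne']; simp
      rw [hz]
      have hc2 : ∀ n : ℕ, n ≠ 0 → (0:ℂ) ^ n / Complex.Gamma (((β * (n:ℝ) + 1 : ℝ) : ℂ)) = 0 := by
        intro n hn; rw [zero_pow hn]; simp
      rw [tsum_eq_single 0 hc2]
      simp [coeff, Complex.Gamma_one]
  exact ⟨part1, part2, part3⟩
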